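/- Let Q = {δ₀} and P = {(1/2 − 1/n)δ₀ + (1/2 + 1/n)δ_n : n ∈ ℕ, n ≥ 2} be probability measures on ℝ (or ℕ). Then the infimum of d_TV(μ, δ₀) over μ ∈ conv(P) equals 1/2, but no countably additive probability measure in the total-variation closure of conv(P) achieves distance 1/2 from δ₀. -/

import Mathlib

/-!
For a probability measure `μ` on `ℝ`, `tvDist μ δ₀ = μ {0}ᶜ`. The `n`-th generator puts mass
`1/2 + 1/n` off `0`, so every convex combination is at distance `≥ 1/2` from `δ₀`, and the
generators approach `1/2`.

Every generator, hence every `ν ∈ conv(P)`, satisfies the affine inequality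
`1 + N/2 ≤ 2 ν (N, ∞) + N ν {0}ᶜ` for all `N : ℕ`: either `n > N` and the mass at `n` lies
beyond `N`, or `n ≤ N` and the excess `N/n ≥ 1` off `0` pays for it. A probability measure at
distance exactly `1/2` has `μ {0}ᶜ = 1/2` and, by countable additivity, `μ (N, ∞) < 1/4` for
some `N`; then no `ν` within `1/(2(N+2))` of `μ` can satisfy the inequality.
-/

open MeasureTheory
open scoped ENNReal

def convHull {Ω : Type*} [MeasurableSpace Ω] (P : Set (Measure Ω)) : Set (Measure Ω) :=
  {μ | ∃ (n : ℕ) (w : Fin n → ℝ≥0∞) (μs : Fin n → Measure Ω),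
    (∀ i, μs i ∈ P) ∧ (∑ i, w i = 1) ∧ μ = ∑ i, w i • μs i}

noncomputable def tvDist {Ω : Type*} [MeasurableSpace Ω] (μ ν : Measure Ω) : ℝ :=
  ⨆ A : {s : Set Ω // MeasurableSet s}, |(μ A.1).toReal - (ν A.1).toReal|

open Set Filter Topology

section TotalVariation

variable {Ω : Type*} [MeasurableSpace Ω]

lemma tvDist_bddAbove (μ ν : Measure Ω) [IsFiniteMeasure μ] [IsFiniteMeasure ν] :
    BddAbove (range fun A : {s : Set Ω // MeasurableSet s} =>
      |(μ A.1).toReal - (ν A.1).toReal|) := by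
  refine ⟨μ.real univ + ν.real univ, ?_⟩
  rintro _ ⟨A, rfl⟩
  calc |μ.real A.1 - ν.real A.1| ≤ |μ.real A.1| + |ν.real A.1| := abs_sub _ _
    _ ≤ μ.real univ + ν.real univ := by
      rw [abs_of_nonneg measureReal_nonneg, abs_of_nonneg measureReal_nonneg]
      exact add_le_add (measureReal_mono (subset_univ _)) (measureReal_mono (subset_univ _))

lemma abs_measureReal_sub_le_tvDist (μ ν : Measure Ω) [IsFiniteMeasure μ] [IsFiniteMeasure ν]
    {A : Set Ω} (hA : MeasurableSet A) : |μ.real A - ν.real A| ≤ tvDist μ ν :=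
  le_ciSup (tvDist_bddAbove μ ν) ⟨A, hA⟩

lemma tvDist_dirac [MeasurableSingletonClass Ω] (μ : Measure Ω) [IsProbabilityMeasure μ]
    (x : Ω) : tvDist μ (Measure.dirac x) = μ.real {x}ᶜ := by
  refine le_antisymm (ciSup_le fun ⟨A, hA⟩ => ?_) ?_
  · change |μ.real A - (Measure.dirac x).real A| ≤ μ.real {x}ᶜ
    by_cases hx : x ∈ A
    · rw [measureReal_def (Measure.dirac x), Measure.dirac_apply_of_mem hx, ENNReal.toReal_one,
        abs_sub_comm, ← probReal_compl_eq_one_sub hA, abs_of_nonneg measureReal_nonneg]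
      exact measureReal_mono (compl_subset_compl.mpr (singleton_subset_iff.mpr hx))
    · rw [measureReal_def (Measure.dirac x), Measure.dirac_apply, indicator_of_notMem hx,
        ENNReal.toReal_zero, sub_zero, abs_of_nonneg measureReal_nonneg]
      exact measureReal_mono (subset_compl_singleton_iff.mpr hx)
  · simpa [measureReal_def, Measure.dirac_apply] using
      abs_measureReal_sub_le_tvDist μ (Measure.dirac x) (measurableSet_singleton x).compl

end TotalVariation

section ConvexHull

variable {Ω : Type*} [MeasurableSpace Ω]

def measureEvalₗ (A : Set Ω) : Measure Ω →ₗ[ℝ≥0∞] ℝ≥0∞ where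
  toFun μ := μ A
  map_add' _ _ := rfl
  map_smul' _ _ := rfl

@[simp]
lemma measureEvalₗ_apply (A : Set Ω) (μ : Measure Ω) : measureEvalₗ A μ = μ A := rfl

lemma subset_convHull (P : Set (Measure Ω)) : P ⊆ convHull P :=
  fun μ hμ => ⟨1, fun _ => 1, fun _ => μ, fun _ => hμ, by simp, by simp⟩

lemma le_of_mem_convHull {P : Set (Measure Ω)} (f : Measure Ω →ₗ[ℝ≥0∞] ℝ≥0∞)
    {c : ℝ≥0∞} (hP : ∀ μ ∈ P, c ≤ f μ) {ν : Measure Ω} (hν : ν ∈ convHull P) : c ≤ f ν := by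
  obtain ⟨n, w, μs, hμs, hw, rfl⟩ := hν
  calc c = ∑ i, w i * c := by rw [← Finset.sum_mul, hw, one_mul]
    _ ≤ ∑ i, w i * f (μs i) := by gcongr with i; exact hP _ (hμs i)
    _ = f (∑ i, w i • μs i) := by simp [map_sum]

lemma isProbabilityMeasure_of_mem_convHull {P : Set (Measure Ω)}
    (hP : ∀ μ ∈ P, IsProbabilityMeasure μ) {ν : Measure Ω} (hν : ν ∈ convHull P) :
    IsProbabilityMeasure ν := by
  obtain ⟨n, w, μs, hμs, hw, rfl⟩ := hν
  constructor
  have : ∀ i, μs i univ = 1 := fun i => (hP _ (hμs i)).measure_univ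
  simp [this, hw]

end ConvexHull

lemma exists_measureReal_Ioi_natCast_lt (μ : Measure ℝ) [IsProbabilityMeasure μ] {ε : ℝ}
    (hε : 0 < ε) : ∃ N : ℕ, μ.real (Ioi (N : ℝ)) < ε := by
  have htail : Tendsto (fun x => μ.real (Ioi x)) atTop (𝓝 0) := by
    have h := (ProbabilityTheory.tendsto_cdf_atTop μ).const_sub 1
    rw [sub_self] at h
    refine h.congr fun x => ?_
    rw [ProbabilityTheory.cdf_eq_real, ← probReal_compl_eq_one_sub measurableSet_Iic, compl_Iic]
  exact ((htail.comp tendsto_natCast_atTop_atTop).eventually (gt_mem_nhds hε)).exists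

noncomputable def mixedDirac (n : ℕ) : Measure ℝ :=
  ENNReal.ofReal (1/2 - 1/(n:ℝ)) • Measure.dirac (0:ℝ) +
    ENNReal.ofReal (1/2 + 1/(n:ℝ)) • Measure.dirac (n:ℝ)

def mixedDiracs : Set (Measure ℝ) := {μ | ∃ n : ℕ, 2 ≤ n ∧ μ = mixedDirac n}

lemma ofReal_half_add_inv {n : ℕ} (hn : n ≠ 0) :
    ENNReal.ofReal (1/2 + 1/(n:ℝ)) = 2⁻¹ + (n : ℝ≥0∞)⁻¹ := by
  rw [ENNReal.ofReal_add (by norm_num) (by positivity), one_div, one_div,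
    ENNReal.ofReal_inv_of_pos two_pos, ENNReal.ofReal_ofNat,
    ENNReal.ofReal_inv_of_pos (by positivity), ENNReal.ofReal_natCast]

lemma isProbabilityMeasure_mixedDirac {n : ℕ} (hn : 2 ≤ n) :
    IsProbabilityMeasure (mixedDirac n) := by
  have h2n : 1/(n:ℝ) ≤ 1/2 := one_div_le_one_div_of_le two_pos (by exact_mod_cast hn)
  constructor
  simp only [mixedDirac, Measure.coe_add, Measure.coe_smul, Pi.add_apply, Pi.smul_apply,
    measure_univ, smul_eq_mul, mul_one]
  rw [← ENNReal.ofReal_add (by linarith) (by positivity)]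
  norm_num

lemma mixedDirac_compl_zero {n : ℕ} (hn : n ≠ 0) :
    mixedDirac n {0}ᶜ = 2⁻¹ + (n : ℝ≥0∞)⁻¹ := by
  rw [mixedDirac, ofReal_half_add_inv hn]
  simp [hn]

lemma mixedDirac_Ioi {n : ℕ} (hn : n ≠ 0) (N : ℕ) :
    mixedDirac n (Ioi (N : ℝ)) = if N < n then 2⁻¹ + (n : ℝ≥0∞)⁻¹ else 0 := by
  rw [mixedDirac, ofReal_half_add_inv hn]
  simp [indicator, not_lt.mpr (Nat.cast_nonneg (α := ℝ) N)]

lemma one_add_half_le_mixedDirac {n : ℕ} (hn : n ≠ 0) (N : ℕ) :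
    1 + N / 2 ≤ 2 * mixedDirac n (Ioi (N : ℝ)) + N * mixedDirac n {0}ᶜ := by
  rw [mixedDirac_Ioi hn, mixedDirac_compl_zero hn, mul_add, div_eq_mul_inv]
  split_ifs with hN
  · calc (1 : ℝ≥0∞) + N * 2⁻¹ = 2 * 2⁻¹ + N * 2⁻¹ := by
          rw [ENNReal.mul_inv_cancel two_ne_zero ENNReal.ofNat_ne_top]
      _ ≤ 2 * (2⁻¹ + (n : ℝ≥0∞)⁻¹) + (N * 2⁻¹ + N * (n : ℝ≥0∞)⁻¹) := by
        gcongr <;> exact le_self_add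
  · calc (1 : ℝ≥0∞) + N * 2⁻¹ = n * (n : ℝ≥0∞)⁻¹ + N * 2⁻¹ := by
          rw [ENNReal.mul_inv_cancel (by exact_mod_cast hn) (ENNReal.natCast_ne_top n)]
      _ ≤ 2 * 0 + (N * 2⁻¹ + N * (n : ℝ≥0∞)⁻¹) := by
        rw [mul_zero, zero_add, add_comm (_ * 2⁻¹)]
        gcongr
        exact_mod_cast not_lt.mp hN

lemma isProbabilityMeasure_of_mem_convHull_mixedDiracs {ν : Measure ℝ}
    (hν : ν ∈ convHull mixedDiracs) : IsProbabilityMeasure ν :=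
  isProbabilityMeasure_of_mem_convHull
    (by rintro _ ⟨n, hn, rfl⟩; exact isProbabilityMeasure_mixedDirac hn) hν

lemma one_add_half_le_of_mem_convHull {ν : Measure ℝ} (hν : ν ∈ convHull mixedDiracs)
    (N : ℕ) : 1 + N / 2 ≤ 2 * ν.real (Ioi (N : ℝ)) + N * ν.real {0}ᶜ := by
  have := isProbabilityMeasure_of_mem_convHull_mixedDiracs hν
  have h := le_of_mem_convHull (2 • measureEvalₗ (Ioi (N : ℝ)) + N • measureEvalₗ {0}ᶜ)
    (c := 1 + N / 2) (by
      rintro _ ⟨n, hn, rfl⟩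
      simpa using one_add_half_le_mixedDirac (by omega : n ≠ 0) N) hν
  simp only [LinearMap.add_apply, LinearMap.smul_apply, measureEvalₗ_apply, nsmul_eq_mul] at h
  replace h := ENNReal.toReal_mono (by finiteness) h
  rw [ENNReal.toReal_add (by finiteness) (by finiteness),
    ENNReal.toReal_add (by finiteness) (by finiteness)] at h
  simpa [ENNReal.toReal_mul, ENNReal.toReal_div, measureReal_def] using h

lemma half_le_tvDist_of_mem_convHull {ν : Measure ℝ} (hν : ν ∈ convHull mixedDiracs) :
    1/2 ≤ tvDist ν (Measure.dirac 0) := by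
  have := isProbabilityMeasure_of_mem_convHull_mixedDiracs hν
  have h := one_add_half_le_of_mem_convHull hν 0
  have hmono : ν.real (Ioi 0) ≤ ν.real {0}ᶜ := measureReal_mono fun x hx => ne_of_gt hx
  rw [tvDist_dirac]
  push_cast at h
  linarith

lemma tvDist_mixedDirac {n : ℕ} (hn : 2 ≤ n) :
    tvDist (mixedDirac n) (Measure.dirac 0) = 1/2 + 1/(n:ℝ) := by
  have := isProbabilityMeasure_mixedDirac hn
  have hn0 : n ≠ 0 := by omega
  rw [tvDist_dirac, measureReal_def, mixedDirac_compl_zero hn0,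
    ENNReal.toReal_add (by simp) (by simpa using hn0)]
  simp

lemma iInf_tvDist_convHull_mixedDiracs :
    ⨅ ν : convHull mixedDiracs, tvDist (ν : Measure ℝ) (Measure.dirac 0) = 1/2 := by
  have hlow : ∀ ν : convHull mixedDiracs, 1/2 ≤ tvDist (ν : Measure ℝ) (Measure.dirac 0) :=
    fun ν => half_le_tvDist_of_mem_convHull ν.2
  have hmem {n : ℕ} (hn : 2 ≤ n) : mixedDirac n ∈ convHull mixedDiracs :=
    subset_convHull _ ⟨n, hn, rfl⟩
  have : Nonempty (convHull mixedDiracs) := ⟨⟨_, hmem le_rfl⟩⟩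
  refine le_antisymm ?_ (le_ciInf hlow)
  have hlim : Tendsto (fun n : ℕ => 1/2 + 1/(n:ℝ)) atTop (𝓝 (1/2)) := by
    simpa using tendsto_one_div_atTop_nhds_zero_nat.const_add (1/2 : ℝ)
  refine ge_of_tendsto hlim (eventually_atTop.mpr ⟨2, fun n hn => ?_⟩)
  rw [← tvDist_mixedDirac hn]
  exact ciInf_le ⟨1/2, forall_mem_range.mpr hlow⟩ ⟨_, hmem hn⟩

lemma tvDist_dirac_ne_half_of_forall_tvDist_lt (μ : Measure ℝ) [IsProbabilityMeasure μ]
    (hμ : ∀ ε : ℝ, 0 < ε → ∃ ν ∈ convHull mixedDiracs, tvDist μ ν < ε) :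
    tvDist μ (Measure.dirac 0) ≠ 1/2 := by
  intro hhalf
  rw [tvDist_dirac] at hhalf
  obtain ⟨N, hN⟩ := exists_measureReal_Ioi_natCast_lt μ (by norm_num : (0:ℝ) < 1/4)
  set ε : ℝ := 1 / (2 * (N + 2)) with hε
  have hεN : (N + 2) * ε = 1/2 := by rw [hε]; field_simp
  obtain ⟨ν, hν, hμν⟩ := hμ ε (by positivity)
  have := isProbabilityMeasure_of_mem_convHull_mixedDiracs hν
  have h0 := (abs_measureReal_sub_le_tvDist μ ν (measurableSet_singleton 0).compl).trans_lt hμν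
  have hI := (abs_measureReal_sub_le_tvDist μ ν (measurableSet_Ioi (a := (N : ℝ)))).trans_lt hμν
  rw [abs_lt] at h0 hI
  have hN0 : (N:ℝ) * ν.real {0}ᶜ ≤ N * (1/2 + ε) :=
    mul_le_mul_of_nonneg_left (by linarith) (Nat.cast_nonneg N)
  have := one_add_half_le_of_mem_convHull hν N
  linarith

/-- With `P = {(1/2 − 1/n)δ₀ + (1/2 + 1/n)δ_n : n ≥ 2}`, the infimum total variation
distance from `conv(P)` to `δ₀` equals `1/2`, yet no countably additive probability
measure in the TV closure of `conv(P)` achieves distance `1/2` from `δ₀`. -/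
theorem stmt16 :
    let P : Set (Measure ℝ) :=
      {μ | ∃ n : ℕ, 2 ≤ n ∧
        μ = ENNReal.ofReal (1/2 - 1/(n:ℝ)) • Measure.dirac (0:ℝ) +
            ENNReal.ofReal (1/2 + 1/(n:ℝ)) • Measure.dirac (n:ℝ)}
    (⨅ μ : convHull P, tvDist (μ : Measure ℝ) (Measure.dirac (0:ℝ))) = 1/2 ∧
      ∀ μ : Measure ℝ, IsProbabilityMeasure μ →
        (∀ ε : ℝ, 0 < ε → ∃ ν ∈ convHull P, tvDist μ ν < ε) →
        tvDist μ (Measure.dirac (0:ℝ)) ≠ 1/2 :=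
  ⟨iInf_tvDist_convHull_mixedDiracs,
    fun μ _ hμ => tvDist_dirac_ne_half_of_forall_tvDist_lt μ hμ⟩
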